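/- arXiv:2002.00697 — 2 statements merged into one kernel-verified Lean document; each statement's English description precedes it below -/
import Mathlib

section
/- Define subspaces of Iuₙ by F₀ = Iuₙ, F_p = span({x_{ij} : λ(i,j) ≥ p} ∪ {b_i : 1 ≤ i ≤ n}) for 1 ≤ p ≤ n, and F_p = 0 for p > n. Then this is a Lie algebra filtration: [F_p, F_q] ⊆ F_{p+q} for all p, q ≥ 0. In particular, [F_p, F_q] = 0 whenever p + q > n. -/
/-- Index set for the basis of `Iuₙ`: the off-diagonal pairs indexing the `x_{ij}` (`i ≠ j`),
then the `a_i`'s, then the `b_i`'s. -/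
abbrev IuIdx (n : ℕ) : Type := { p : Fin n × Fin n // p.1 ≠ p.2 } ⊕ (Fin n ⊕ Fin n)

/-- `Iuₙ`: the free `K`-vector space on the basis `{x_{ij} : i ≠ j} ∪ {a_i} ∪ {b_i}`. -/
abbrev Iu (n : ℕ) (K : Type*) [Field K] : Type _ := IuIdx n →₀ K

variable (n : ℕ) (K : Type*) [Field K]

/-- The basis element `x_{ij}` (`i ≠ j`). -/
noncomputable def xE (i j : Fin n) (h : i ≠ j) : Iu n K :=
  Finsupp.single (Sum.inl ⟨(i, j), h⟩) 1

/-- The basis element `a_i`. -/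
noncomputable def aE (i : Fin n) : Iu n K := Finsupp.single (Sum.inr (Sum.inl i)) 1

/-- The basis element `b_i`. -/
noncomputable def bE (i : Fin n) : Iu n K := Finsupp.single (Sum.inr (Sum.inr i)) 1

/-- `x_{ij}` as a total function (junk value `0` when `i = j`). -/
noncomputable def xe (i j : Fin n) : Iu n K := if h : i ≠ j then xE n K i j h else 0

/-- The length `λ(i,j)`: equals `j - i` if `i < j`, and `n - (i - j)` if `i > j`. -/
def lam (n : ℕ) (i j : Fin n) : ℕ := (j - i : Fin n).val

/-- The bracket of `Iuₙ` on basis elements: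
`[x_{ij}, x_{kl}] = δ_{jk} x_{il} - δ_{li} x_{kj}` if `λ(i,j) + λ(k,l) < n` and `0` otherwise
(unless both `j = k` and `l = i`); `[x_{ij}, x_{ji}] = ½(b_i - b_j)`;
`[a_i, x_{jk}] = (δ_{ij} - δ_{ik}) x_{jk}`; `[b_i, x_{jk}] = 0`;
`[a_i, a_j] = [b_i, b_j] = [a_i, b_j] = 0`; extended antisymmetrically. -/
noncomputable def bb : IuIdx n → IuIdx n → Iu n K
  | Sum.inl ⟨(i, j), _⟩, Sum.inl ⟨(k, l), _⟩ =>
      if k = j ∧ l = i then ((2 : K)⁻¹) • (bE n K i - bE n K j)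
      else if lam n i j + lam n k l < n then
        (if j = k then xe n K i l else 0) - (if l = i then xe n K k j else 0)
      else 0
  | Sum.inr (Sum.inl i), Sum.inl ⟨(j, k), _⟩ =>
      (((if i = j then 1 else 0) : K) - ((if i = k then 1 else 0) : K)) • xe n K j k
  | Sum.inl ⟨(j, k), _⟩, Sum.inr (Sum.inl i) =>
      -((((if i = j then 1 else 0) : K) - ((if i = k then 1 else 0) : K)) • xe n K j k)
  | _, _ => 0

/-- The bilinear bracket of `Iuₙ`, extended bilinearly from its values on basis elements. -/
noncomputable def br : Iu n K →ₗ[K] Iu n K →ₗ[K] Iu n K :=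
  Finsupp.lift (Iu n K →ₗ[K] Iu n K) K (IuIdx n) fun s =>
    Finsupp.lift (Iu n K) K (IuIdx n) fun t => bb n K s t

/-- The filtration of `Iuₙ`: `F 0 = Iuₙ`, `F p = span({x_{ij} : λ(i,j) ≥ p} ∪ {b_i})` for
`1 ≤ p ≤ n`, and `F p = 0` for `p > n`. -/
noncomputable def filt (p : ℕ) : Submodule K (Iu n K) :=
  if p = 0 then ⊤
  else if p ≤ n then
    Submodule.span K
      ({v | ∃ (i j : Fin n) (h : i ≠ j), p ≤ lam n i j ∧ v = xE n K i j h} ∪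
        {v | ∃ i : Fin n, v = bE n K i})
  else ⊥

/-!
Give each basis vector a degree: `λ(i,j)` for `x_{ij}`, `0` for `a_i`, `n` for `b_i`, so that
`F p` is spanned by the basis vectors of degree at least `p`. By bilinearity it suffices that the
bracket of two basis vectors lies in `F` of the sum of their degrees. For `[x_{ij}, x_{jl}]` this
is the additivity `λ(i,l) = λ(i,j) + λ(j,l)`, valid when the right side is below `n`
(otherwise the bracket vanishes); for `[x_{ij}, x_{ji}]` it is `λ(i,j) + λ(j,i) = n`, the
degree of the `b`'s. The second claim follows because `F p = 0` for `p > n`.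
-/
namespace Iu

variable {n : ℕ} {K : Type*} [Field K]

lemma lam_lt (i j : Fin n) : lam n i j < n := (j - i).isLt

lemma lam_of_le {i j : Fin n} (h : i ≤ j) : lam n i j = j - i :=
  Fin.coe_sub_iff_le.mpr h

lemma lam_of_lt {i j : Fin n} (h : j < i) : lam n i j = n + j - i :=
  Fin.coe_sub_iff_lt.mpr h

lemma lam_add_lam_swap {i j : Fin n} (h : i ≠ j) : lam n i j + lam n j i = n := by
  rcases lt_or_gt_of_ne h with h | h
  · rw [lam_of_le h.le, lam_of_lt h]; omega
  · rw [lam_of_lt h, lam_of_le h.le]; omega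

lemma lam_add_of_lt {i j l : Fin n} (h : lam n i j + lam n j l < n) :
    lam n i l = lam n i j + lam n j l := by
  have := i.isLt
  rcases le_or_gt i j with hij | hij <;> rcases le_or_gt j l with hjl | hjl <;>
    rcases le_or_gt i l with hil | hil <;>
    simp only [lam_of_le, lam_of_lt, hij, hjl, hil] at h ⊢ <;> omega

def basisDeg (n : ℕ) : IuIdx n → ℕ
  | Sum.inl ⟨(i, j), _⟩ => lam n i j
  | Sum.inr (Sum.inl _) => 0
  | Sum.inr (Sum.inr _) => n

lemma basisDeg_le (s : IuIdx n) : basisDeg n s ≤ n := by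
  rcases s with ⟨⟨i, j⟩, _⟩ | _ | _
  exacts [(lam_lt i j).le, Nat.zero_le n, le_rfl]

lemma filt_eq_span (p : ℕ) :
    filt n K p = Submodule.span K ((Finsupp.single · 1) '' {s | p ≤ basisDeg n s}) := by
  unfold filt
  split_ifs with h0 hpn
  · subst h0
    simpa [Finsupp.coe_basisSingleOne] using (Finsupp.basisSingleOne (R := K)).span_eq.symm
  · congr 1
    ext v
    constructor
    · rintro (⟨i, j, h, hle, rfl⟩ | ⟨i, rfl⟩)
      exacts [⟨Sum.inl ⟨(i, j), h⟩, hle, rfl⟩, ⟨Sum.inr (Sum.inr i), hpn, rfl⟩]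
    · rintro ⟨⟨⟨i, j⟩, h⟩ | i | i, hs, rfl⟩
      · exact Or.inl ⟨i, j, h, hs, rfl⟩
      · exact absurd hs (by simp only [basisDeg, Set.mem_ofPred_eq]; omega)
      · exact Or.inr ⟨i, rfl⟩
  · have : {s | p ≤ basisDeg n s} = ∅ :=
      Set.eq_empty_of_forall_notMem fun s hs => hpn (hs.trans (basisDeg_le s))
    rw [this, Set.image_empty, Submodule.span_empty]

lemma filt_antitone : Antitone (filt n K) := fun p q hpq => by
  rw [filt_eq_span, filt_eq_span]
  exact Submodule.span_mono (Set.image_mono fun s hs => hpq.trans hs)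

lemma filt_eq_bot_of_lt {p : ℕ} (hp : n < p) : filt n K p = ⊥ := by
  simp only [filt, if_neg (show p ≠ 0 by omega), if_neg (show ¬p ≤ n by omega)]

lemma xe_mem_filt {p : ℕ} {i j : Fin n} (hp : p ≤ lam n i j) : xe n K i j ∈ filt n K p := by
  rw [xe]
  split_ifs with h
  · rw [filt_eq_span]
    exact Submodule.subset_span ⟨Sum.inl ⟨(i, j), h⟩, hp, rfl⟩
  · exact zero_mem _

lemma bE_mem_filt (i : Fin n) : bE n K i ∈ filt n K n := by
  rw [filt_eq_span]
  exact Submodule.subset_span ⟨Sum.inr (Sum.inr i), (le_rfl : n ≤ n), rfl⟩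

lemma br_single_single (s t : IuIdx n) :
    br n K (Finsupp.single s 1) (Finsupp.single t 1) = bb n K s t := by
  simp [br, Finsupp.lift_apply, Finsupp.sum_single_index]

lemma bb_mem_filt_basisDeg_add (s t : IuIdx n) :
    bb n K s t ∈ filt n K (basisDeg n s + basisDeg n t) := by
  rcases s with ⟨⟨i, j⟩, hij⟩ | i | i <;> rcases t with ⟨⟨k, l⟩, hkl⟩ | k | k <;>
    simp only [bb, basisDeg, add_zero, zero_add]
  case inl.inl =>
    split_ifs with hji hlt hjk hli hli
    · rw [hji.1, hji.2, lam_add_lam_swap hij]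
      exact Submodule.smul_mem _ _ (sub_mem (bE_mem_filt i) (bE_mem_filt j))
    · exact absurd ⟨hjk.symm, hli⟩ hji
    · subst hjk
      exact sub_mem (xe_mem_filt (lam_add_of_lt hlt).ge) (zero_mem _)
    · subst hli
      refine sub_mem (zero_mem _) (xe_mem_filt ?_)
      rw [lam_add_of_lt (i := k) (j := l) (l := j) (by omega)]
      omega
    all_goals simp only [sub_self, zero_mem]
  all_goals first
    | exact zero_mem _
    | exact neg_mem (Submodule.smul_mem _ _ (xe_mem_filt le_rfl))
    | exact Submodule.smul_mem _ _ (xe_mem_filt le_rfl)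

lemma br_mem_filt_add {p q : ℕ} {u v : Iu n K} (hu : u ∈ filt n K p) (hv : v ∈ filt n K q) :
    br n K u v ∈ filt n K (p + q) := by
  rw [filt_eq_span] at hu hv
  refine (Submodule.map₂_span_span K (br n K) _ _).le.trans ?_ (Submodule.apply_mem_map₂ _ hu hv)
  rw [Submodule.span_le]
  rintro _ ⟨_, ⟨s, hs, rfl⟩, _, ⟨t, ht, rfl⟩, rfl⟩
  dsimp only
  rw [br_single_single]
  exact filt_antitone (add_le_add hs ht) (bb_mem_filt_basisDeg_add s t)

end Iu

theorem stmt9_general (n : ℕ) (K : Type*) [Field K] :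
    (∀ p q : ℕ, ∀ u ∈ filt n K p, ∀ v ∈ filt n K q, br n K u v ∈ filt n K (p + q)) ∧
    (∀ p q : ℕ, n < p + q → ∀ u ∈ filt n K p, ∀ v ∈ filt n K q, br n K u v = 0) := by
  refine ⟨fun p q u hu v hv => Iu.br_mem_filt_add hu hv, fun p q hpq u hu v hv => ?_⟩
  simpa [Iu.filt_eq_bot_of_lt hpq] using Iu.br_mem_filt_add hu hv

/-- the `F p` form a Lie algebra filtration, `[F_p, F_q] ⊆ F_{p+q}`;
in particular `[F_p, F_q] = 0` whenever `p + q > n`. -/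
theorem stmt9 (n : ℕ) (hn : 2 ≤ n) (K : Type*) [Field K] (hK : (2 : K) ≠ 0) :
    (∀ p q : ℕ, ∀ u ∈ filt n K p, ∀ v ∈ filt n K q, br n K u v ∈ filt n K (p + q)) ∧
    (∀ p q : ℕ, n < p + q → ∀ u ∈ filt n K p, ∀ v ∈ filt n K q, br n K u v = 0) :=
  stmt9_general n K
end

section
/- The Lie algebra Iuₙ is solvable. -/
variable (n : ℕ) (K : Type*) [Field K]

/-- The span of all brackets of elements of `S` with elements of `T`. -/
noncomputable def bracketSpan (S T : Submodule K (Iu n K)) : Submodule K (Iu n K) :=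
  Submodule.span K {w | ∃ u ∈ S, ∃ v ∈ T, w = br n K u v}

/-- The derived series of `Iuₙ`. -/
noncomputable def derSeries : ℕ → Submodule K (Iu n K)
  | 0 => ⊤
  | k + 1 => bracketSpan n K (derSeries k) (derSeries k)

/-! Give `x_{ij}` the weight `λ(i,j) ∈ [1, n)`, `a_i` the weight `0` and `b_i` the weight `∞`.
Since `λ(i,j) + λ(j,l) = λ(i,l)` whenever the left side is below `n`, and the bracket of two
`x`'s is otherwise a combination of `b`'s or zero, the spans `V_m` of the basis vectors of weight
`≥ m` satisfy `[V_m, V_{m'}] ⊆ V_{m+m'}`; and no bracket involves an `a_j`, so `[Iuₙ, Iuₙ] ⊆ V_1`.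
Hence the `k`-th derived algebra lies in `V_k`, and `V_n` is spanned by the central `b_i`. -/

def weight : IuIdx n → ℕ∞
  | Sum.inl p => lam n p.1.1 p.1.2
  | Sum.inr (Sum.inl _) => 0
  | Sum.inr (Sum.inr _) => ⊤

noncomputable def weightFiltration (m : ℕ) : Submodule K (Iu n K) :=
  Finsupp.supported K K {ι | (m : ℕ∞) ≤ weight n ι}

lemma bracketSpan_eq_map₂ (S T : Submodule K (Iu n K)) :
    bracketSpan n K S T = Submodule.map₂ (br n K) S T := by
  rw [bracketSpan, Submodule.map₂_eq_span_image2]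
  congr 1
  ext w
  simp [Set.image2, eq_comm]

lemma br_single_single (s t : IuIdx n) :
    br n K (Finsupp.single s 1) (Finsupp.single t 1) = bb n K s t := by
  simp [br]

lemma bracketSpan_le_of_le_supported {S T W : Submodule K (Iu n K)} {A B : Set (IuIdx n)}
    (hS : S ≤ Finsupp.supported K K A) (hT : T ≤ Finsupp.supported K K B)
    (h : ∀ s ∈ A, ∀ t ∈ B, bb n K s t ∈ W) : bracketSpan n K S T ≤ W := by
  rw [bracketSpan_eq_map₂]
  refine (Submodule.map₂_le_map₂ hS hT).trans ?_
  rw [Finsupp.supported_eq_span_single, Finsupp.supported_eq_span_single,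
    Submodule.map₂_span_span, Submodule.span_le]
  rintro _ ⟨_, ⟨s, hs, rfl⟩, _, ⟨t, ht, rfl⟩, rfl⟩
  simp only [SetLike.mem_coe, br_single_single]
  exact h s hs t ht

lemma weightFiltration_antitone : Antitone (weightFiltration n K) := fun _ _ h =>
  Finsupp.supported_mono fun _ (hι : _ ≤ weight n _) => le_trans (by exact_mod_cast h) hι

lemma single_mem_weightFiltration {m : ℕ} {ι : IuIdx n} (h : (m : ℕ∞) ≤ weight n ι) (c : K) :
    Finsupp.single ι c ∈ weightFiltration n K m :=
  Finsupp.single_mem_supported K c h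

lemma bE_mem_weightFiltration (m : ℕ) (i : Fin n) : bE n K i ∈ weightFiltration n K m :=
  single_mem_weightFiltration n K le_top 1

lemma xe_mem_weightFiltration {m : ℕ} {i j : Fin n} (h : i ≠ j → m ≤ lam n i j) :
    xe n K i j ∈ weightFiltration n K m := by
  unfold xe
  split_ifs with hij
  · exact single_mem_weightFiltration n K (ENat.natCast_le_natCast.2 (h hij)) 1
  · exact zero_mem _

lemma lam_lt (i j : Fin n) : lam n i j < n := (j - i).isLt

section

variable [NeZero n]

lemma lam_pos {i j : Fin n} (h : i ≠ j) : 0 < lam n i j := by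
  rw [lam, Fin.val_pos_iff, Fin.pos_iff_ne_zero, sub_ne_zero]
  exact h.symm

lemma lam_add_of_lt {i j l : Fin n} (h : lam n i j + lam n j l < n) :
    lam n i l = lam n i j + lam n j l := by
  unfold lam at *
  rw [show l - i = (j - i) + (l - j) by abel, Fin.val_add, Nat.mod_eq_of_lt h]

lemma bb_mem_weightFiltration_one (s t : IuIdx n) : bb n K s t ∈ weightFiltration n K 1 := by
  have hx (i j : Fin n) : xe n K i j ∈ weightFiltration n K 1 :=
    xe_mem_weightFiltration n K (lam_pos n)
  have hb (i : Fin n) := bE_mem_weightFiltration n K 1 i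
  rcases s with ⟨⟨i, j⟩, hij⟩ | i | i <;> rcases t with ⟨⟨k, l⟩, hkl⟩ | p | p <;>
    simp only [bb] <;> (try split_ifs) <;> simp only [hx, hb, zero_mem, sub_mem, Submodule.smul_mem, neg_mem]

lemma bb_mem_weightFiltration_add {m m' : ℕ} {s t : IuIdx n} (hs : (m : ℕ∞) ≤ weight n s)
    (ht : (m' : ℕ∞) ≤ weight n t) : bb n K s t ∈ weightFiltration n K (m + m') := by
  have hb (i : Fin n) := bE_mem_weightFiltration n K (m + m') i
  rcases s with ⟨⟨i, j⟩, hij⟩ | i | i <;> rcases t with ⟨⟨k, l⟩, hkl⟩ | p | p <;>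
    simp only [bb, weight, Nat.cast_le, nonpos_iff_eq_zero, Nat.cast_eq_zero] at hs ht ⊢
  case inl.inl =>
    have hcompose {a b c : Fin n} (hlt : lam n a b + lam n b c < n)
        (hm : m + m' ≤ lam n a b + lam n b c) : xe n K a c ∈ weightFiltration n K (m + m') :=
      xe_mem_weightFiltration n K fun _ => (lam_add_of_lt n hlt).symm ▸ hm
    split
    next => exact Submodule.smul_mem _ _ (sub_mem (hb i) (hb j))
    split
    next hlt =>
      refine sub_mem ?_ ?_
      · split_ifs with hjk
        · subst hjk
          exact hcompose hlt (by omega)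
        · exact zero_mem _
      · split_ifs with hli
        · subst hli
          exact hcompose (b := l) (by omega) (by omega)
        · exact zero_mem _
    next => exact zero_mem _
  case inl.inr.inl =>
    subst ht
    exact neg_mem (Submodule.smul_mem _ _ (xe_mem_weightFiltration n K fun _ => hs))
  case inr.inl.inl =>
    subst hs
    rw [zero_add]
    exact Submodule.smul_mem _ _ (xe_mem_weightFiltration n K fun _ => ht)
  all_goals exact zero_mem _

lemma bb_eq_zero_of_le_weight {s : IuIdx n} (hs : (n : ℕ∞) ≤ weight n s) (t : IuIdx n) :
    bb n K s t = 0 := by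
  rcases s with ⟨⟨i, j⟩, hij⟩ | i | i
  · exact absurd (ENat.natCast_le_natCast.1 hs) (lam_lt n i j).not_ge
  · exact absurd hs (by simp [weight, NeZero.ne n])
  · rfl

lemma derSeries_succ_le_weightFiltration (k : ℕ) :
    derSeries n K (k + 1) ≤ weightFiltration n K (k + 1) := by
  induction k with
  | zero =>
    refine bracketSpan_le_of_le_supported n K (A := Set.univ) (B := Set.univ) ?_ ?_
      fun s _ t _ => bb_mem_weightFiltration_one n K s t
    all_goals simp [Finsupp.supported_univ, derSeries]
  | succ k ih =>
    refine (bracketSpan_le_of_le_supported n K ih ih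
      fun s hs t ht => bb_mem_weightFiltration_add n K hs ht).trans ?_
    exact weightFiltration_antitone n K (by omega)

end

theorem stmt11_general (n : ℕ) (hn : 2 ≤ n) (K : Type*) [Field K] :
    ∃ k : ℕ, derSeries n K k = ⊥ := by
  have : NeZero n := ⟨by omega⟩
  have hD : derSeries n K (n + 1) ≤ weightFiltration n K n :=
    (derSeries_succ_le_weightFiltration n K n).trans (weightFiltration_antitone n K n.le_succ)
  refine ⟨n + 2, eq_bot_iff.2 <| bracketSpan_le_of_le_supported n K hD hD fun s hs t _ => ?_⟩
  rw [bb_eq_zero_of_le_weight n K hs t]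
  exact zero_mem _

/-- the Lie algebra `Iuₙ` is solvable. -/
theorem stmt11 (n : ℕ) (hn : 2 ≤ n) (K : Type*) [Field K] (hK : (2 : K) ≠ 0) :
    ∃ k : ℕ, derSeries n K k = ⊥ :=
  stmt11_general n hn K
end
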